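/- Fix N > 0. Suppose H(x) is positive semidefinite with tr H(x) ≤ 1 for a.e. x ∈ [0,N], and let G : [0,N] × [0,N] → M₂(ℂ) be measurable with ∫₀ᴺ∫₀ᴺ ‖G(x,t)‖² dx dt < ∞. Let μ ∈ ℂ with μ ≠ 0 and let f : [0,N] → ℂ² be square integrable (with respect to Lebesgue measure). Then the following are equivalent: (1) ∫₀ᴺ H(x)^{1/2} G(x,t) H(t)^{1/2} f(t) dt = μ f(x) for a.e. x ∈ [0,N]; (2) there exists a measurable y : [0,N] → ℂ² with ∫₀ᴺ y(t)* H(t) y(t) dt < ∞ such that f(x) = H(x)^{1/2} y(x) for a.e. x and H(x)^{1/2} ( ∫₀ᴺ G(x,t) H(t) y(t) dt − μ y(x) ) = 0 for a.e. x ∈ [0,N]. -/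

import Mathlib

open MeasureTheory Matrix Set
open scoped ComplexOrder

noncomputable section

/-- The operator norm of a `2×2` complex matrix, acting on Euclidean space `ℂ²`. -/
def opNorm (A : Matrix (Fin 2) (Fin 2) ℂ) : ℝ := ‖Matrix.toEuclideanCLM (𝕜 := ℂ) A‖

/-!
Write `B = H^{1/2}`. The substitution `f = B y` intertwines the two problems, since
`B(x) G(x,t) B(t) f(t) = B(x) G(x,t) H(t) y(t)`; from an eigenfunction `f` one recovers
`y = μ⁻¹ ∫ G(·,t) B(t) f(t) dt`, and then `B y = f` is the eigenvalue equation itself.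
The integrals make sense because `tr H ≤ 1` makes `B` a contraction
(`‖B v‖² ≤ ‖B‖_F² ‖v‖² = tr H ‖v‖²`), so `B f ∈ L²`, and almost every slice of the
Hilbert–Schmidt kernel `G(x,·)` is in `L²`.
-/

open WithLp

lemma norm_le_norm_toLp {ι E : Type*} [Fintype ι] [SeminormedAddCommGroup E] (v : ι → E) :
    ‖v‖ ≤ ‖toLp 2 v‖ :=
  (pi_norm_le_iff_of_nonneg (norm_nonneg _)).2 fun i => PiLp.norm_apply_le (toLp 2 v) i

lemma star_dotProduct_self_eq_norm_sq {n 𝕜 : Type*} [Fintype n] [RCLike 𝕜] (v : n → 𝕜) :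
    star v ⬝ᵥ v = ((‖toLp 2 v‖ ^ 2 : ℝ) : 𝕜) := by
  rw [dotProduct_comm, ← EuclideanSpace.inner_toLp_toLp, inner_self_eq_norm_sq_to_K]
  push_cast; rfl

namespace Matrix

variable {m n 𝕜 : Type*} [Fintype m] [Fintype n] [RCLike 𝕜]

section Frobenius
open scoped Matrix.Norms.Frobenius

lemma frobenius_norm_eq_norm_toLp_vec (B : Matrix m n 𝕜) : ‖B‖ = ‖toLp 2 B.vec‖ := by
  rw [frobenius_norm_def, EuclideanSpace.norm_eq, Real.sqrt_eq_rpow, Fintype.sum_prod_type,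
    Finset.sum_comm]
  simp only [Real.rpow_two]
  rfl

lemma frobenius_norm_sq_eq_re_trace (B : Matrix m n 𝕜) :
    ‖B‖ ^ 2 = RCLike.re (Bᴴ * B).trace := by
  rw [← star_vec_dotProduct_vec, star_dotProduct_self_eq_norm_sq, RCLike.ofReal_re,
    frobenius_norm_eq_norm_toLp_vec]

lemma norm_toLp_mulVec_sq_le (B : Matrix m n 𝕜) (v : n → 𝕜) :
    ‖toLp 2 (B *ᵥ v)‖ ^ 2 ≤ RCLike.re (Bᴴ * B).trace * ‖toLp 2 v‖ ^ 2 := by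
  have h : ‖toLp 2 (B *ᵥ v)‖ ≤ ‖B‖ * ‖toLp 2 v‖ := by
    rw [← frobenius_norm_replicateCol (ι := Unit), ← frobenius_norm_replicateCol (ι := Unit),
      replicateCol_mulVec]
    exact frobenius_norm_mul _ _
  rw [← frobenius_norm_sq_eq_re_trace, ← mul_pow]
  gcongr

end Frobenius

lemma IsHermitian.star_dotProduct_mul_self_mulVec {B : Matrix n n 𝕜} (hB : B.IsHermitian)
    (v : n → 𝕜) : star v ⬝ᵥ (B * B) *ᵥ v = ((‖toLp 2 (B *ᵥ v)‖ ^ 2 : ℝ) : 𝕜) := by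
  rw [← star_dotProduct_self_eq_norm_sq, star_mulVec, hB.eq, ← mulVec_mulVec,
    dotProduct_mulVec]

lemma IsHermitian.norm_toLp_mulVec_le {B : Matrix n n 𝕜} (hB : B.IsHermitian)
    (htr : RCLike.re (B * B).trace ≤ 1) (v : n → 𝕜) : ‖toLp 2 (B *ᵥ v)‖ ≤ ‖toLp 2 v‖ := by
  have h := norm_toLp_mulVec_sq_le B v
  rw [hB.eq] at h
  exact (sq_le_sq₀ (norm_nonneg _) (norm_nonneg _)).1
    (h.trans (mul_le_of_le_one_left (by positivity) htr))

variable [DecidableEq n]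

lemma norm_mulVec_le_norm_toEuclideanCLM (A : Matrix n n 𝕜) (v : n → 𝕜) :
    ‖A *ᵥ v‖ ≤ ‖toEuclideanCLM (𝕜 := 𝕜) A‖ * ‖toLp 2 v‖ :=
  (norm_le_norm_toLp _).trans ((toEuclideanCLM (𝕜 := 𝕜) A).le_opNorm (toLp 2 v))

lemma continuous_norm_toEuclideanCLM :
    Continuous fun A : n → n → 𝕜 => ‖toEuclideanCLM (𝕜 := 𝕜) (of A)‖ :=
  ((toEuclideanCLM (n := n) (𝕜 := 𝕜)).toAlgEquiv.toLinearMap.comp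
    (ofLinearEquiv 𝕜).toLinearMap).continuous_of_finiteDimensional.norm

end Matrix

section Kernel

variable {α m n : Type*} [MeasurableSpace α] [Fintype n] {ν : Measure α}

lemma measurable_mulVec {M : α → Matrix m n ℂ} {Z : α → n → ℂ}
    (hM : ∀ i j, Measurable fun t => M t i j) (hZ : Measurable Z) :
    Measurable fun t => M t *ᵥ Z t :=
  measurable_pi_lambda _ fun i =>
    Finset.measurable_sum _ fun j _ => (hM i j).mul (measurable_pi_apply j |>.comp hZ)

lemma memLp_toLp_iff {p : ENNReal} {Z : α → n → ℂ} :
    MemLp (fun t => toLp 2 (Z t)) p ν ↔ MemLp Z p ν := by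
  rw [memLp_piLp_iff, memLp_pi_iff]

lemma integral_mulVec [Fintype m] (A : Matrix m n ℂ) {F : α → n → ℂ} (hF : Integrable F ν) :
    ∫ t, A *ᵥ F t ∂ν = A *ᵥ ∫ t, F t ∂ν :=
  (mulVecLin A).toContinuousLinearMap.integral_comp_comm hF

lemma memLp_mulVec_of_norm_le {B : α → Matrix n n ℂ} (hBm : ∀ i j, Measurable fun t => B t i j)
    (hB : ∀ᵐ t ∂ν, ∀ v, ‖toLp 2 (B t *ᵥ v)‖ ≤ ‖toLp 2 v‖) {Z : α → n → ℂ} (hZm : Measurable Z)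
    (hZ : MemLp Z 2 ν) : MemLp (fun t => B t *ᵥ Z t) 2 ν :=
  (memLp_toLp_iff.2 hZ).of_le (measurable_mulVec hBm hZm).aestronglyMeasurable
    (hB.mono fun t ht => (norm_le_norm_toLp _).trans (ht (Z t)))

variable [DecidableEq n] [SFinite ν]

lemma ae_integrable_mulVec_of_memLp {K : α → α → Matrix n n ℂ}
    (hKm : ∀ i j, Measurable fun p : α × α => K p.1 p.2 i j)
    (hK : Integrable (fun p : α × α => ‖toEuclideanCLM (𝕜 := ℂ) (K p.1 p.2)‖ ^ 2) (ν.prod ν))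
    {Z : α → n → ℂ} (hZm : Measurable Z) (hZ : MemLp Z 2 ν) :
    ∀ᵐ x ∂ν, Integrable (fun t => K x t *ᵥ Z t) ν := by
  filter_upwards [hK.prod_right_ae] with x hx
  have hKxm : ∀ i j, Measurable fun t => K x t i j := fun i j =>
    (hKm i j).comp measurable_prodMk_left
  have hKx : MemLp (fun t => ‖toEuclideanCLM (𝕜 := ℂ) (K x t)‖) 2 ν :=
    (memLp_two_iff_integrable_sq (continuous_norm_toEuclideanCLM.measurable.comp
      (measurable_pi_lambda _ fun i => measurable_pi_lambda _ fun j =>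
        hKxm i j)).aestronglyMeasurable).2 hx
  refine (hKx.integrable_mul (memLp_toLp_iff.2 hZ).norm).mono'
    (measurable_mulVec hKxm hZm).aestronglyMeasurable
    (ae_of_all _ fun t => norm_mulVec_le_norm_toEuclideanCLM _ _)

variable {H B : α → Matrix n n ℂ} {G : α → α → Matrix n n ℂ} {μ : ℂ} {f : α → n → ℂ}

lemma exists_of_sandwich_eigenfunction (hBm : ∀ i j, Measurable fun t => B t i j)
    (hB : ∀ᵐ t ∂ν, (B t).IsHermitian ∧ B t * B t = H t)
    (hBc : ∀ᵐ t ∂ν, ∀ v, ‖toLp 2 (B t *ᵥ v)‖ ≤ ‖toLp 2 v‖)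
    (hGm : ∀ i j, Measurable fun p : α × α => G p.1 p.2 i j)
    (hG : Integrable (fun p : α × α => ‖toEuclideanCLM (𝕜 := ℂ) (G p.1 p.2)‖ ^ 2) (ν.prod ν))
    (hμ : μ ≠ 0) (hf : MemLp f 2 ν)
    (heig : ∀ᵐ x ∂ν, ∫ t, (B x * G x t * B t) *ᵥ f t ∂ν = μ • f x) :
    ∃ y : α → n → ℂ, Measurable y ∧ Integrable (fun t => star (y t) ⬝ᵥ H t *ᵥ y t) ν ∧
      (∀ᵐ x ∂ν, f x = B x *ᵥ y x) ∧
      ∀ᵐ x ∂ν, B x *ᵥ ((∫ t, (G x t * H t) *ᵥ y t ∂ν) - μ • y x) = 0 := by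
  set g := hf.1.mk f
  have hfg : f =ᵐ[ν] g := hf.1.ae_eq_mk
  set Z : α → n → ℂ := fun t => B t *ᵥ g t
  have hZm : Measurable Z := measurable_mulVec hBm hf.1.stronglyMeasurable_mk.measurable
  have hZ : MemLp Z 2 ν :=
    memLp_mulVec_of_norm_le hBm hBc hf.1.stronglyMeasurable_mk.measurable (hf.ae_eq hfg)
  set y : α → n → ℂ := fun x => μ⁻¹ • ∫ t, G x t *ᵥ Z t ∂ν
  have hym : Measurable y :=
    ((measurable_mulVec hGm (hZm.comp measurable_snd)).stronglyMeasurable.integral_prod_right'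
      |>.measurable).const_smul μ⁻¹
  have hfy : ∀ᵐ x ∂ν, f x = B x *ᵥ y x := by
    filter_upwards [heig, ae_integrable_mulVec_of_memLp hGm hG hZm hZ] with x hx hxint
    calc f x = μ⁻¹ • ∫ t, (B x * G x t * B t) *ᵥ f t ∂ν := by rw [hx, inv_smul_smul₀ hμ]
      _ = μ⁻¹ • ∫ t, B x *ᵥ (G x t *ᵥ Z t) ∂ν := by
        refine congrArg _ (integral_congr_ae (hfg.mono fun t ht => ?_))
        simp only [Z, ht, mulVec_mulVec, mul_assoc]
      _ = B x *ᵥ y x := by rw [integral_mulVec _ hxint, mulVec_smul]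
  have hHy : ∀ᵐ t ∂ν, H t *ᵥ y t = Z t := by
    filter_upwards [hB, hfy, hfg] with t htB hft hgt
    rw [← htB.2, ← mulVec_mulVec, ← hft, hgt]
  refine ⟨y, hym, ?_, hfy, ae_of_all _ fun x => ?_⟩
  · refine ((memLp_toLp_iff.2 hf).norm.integrable_sq.ofReal).congr ?_
    filter_upwards [hB, hfy] with t htB hft
    rw [← htB.2, htB.1.star_dotProduct_mul_self_mulVec, ← hft]
  · have hGHy : ∫ t, (G x t * H t) *ᵥ y t ∂ν = μ • y x := by
      rw [smul_inv_smul₀ hμ]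
      refine integral_congr_ae (hHy.mono fun t ht => ?_)
      simp only [← mulVec_mulVec, ht]
    rw [hGHy, sub_self, mulVec_zero]

lemma sandwich_eigenfunction_of_exists (hBm : ∀ i j, Measurable fun t => B t i j)
    (hB : ∀ᵐ t ∂ν, (B t).IsHermitian ∧ B t * B t = H t)
    (hBc : ∀ᵐ t ∂ν, ∀ v, ‖toLp 2 (B t *ᵥ v)‖ ≤ ‖toLp 2 v‖)
    (hGm : ∀ i j, Measurable fun p : α × α => G p.1 p.2 i j)
    (hG : Integrable (fun p : α × α => ‖toEuclideanCLM (𝕜 := ℂ) (G p.1 p.2)‖ ^ 2) (ν.prod ν))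
    {y : α → n → ℂ} (hym : Measurable y)
    (hyH : Integrable (fun t => star (y t) ⬝ᵥ H t *ᵥ y t) ν)
    (hfy : ∀ᵐ x ∂ν, f x = B x *ᵥ y x)
    (hres : ∀ᵐ x ∂ν, B x *ᵥ ((∫ t, (G x t * H t) *ᵥ y t ∂ν) - μ • y x) = 0) :
    ∀ᵐ x ∂ν, ∫ t, (B x * G x t * B t) *ᵥ f t ∂ν = μ • f x := by
  set w : α → n → ℂ := fun t => B t *ᵥ y t
  have hwm : Measurable w := measurable_mulVec hBm hym
  have hw : MemLp w 2 ν := by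
    refine memLp_toLp_iff.1 ((memLp_two_iff_integrable_sq_norm
      ((WithLp.measurable_toLp 2 _).comp hwm).aestronglyMeasurable).2
        (hyH.re.congr (hB.mono fun t ht => ?_)))
    simp only [← ht.2, ht.1.star_dotProduct_mul_self_mulVec, RCLike.ofReal_re, Function.comp_apply,
      w]
  set Z : α → n → ℂ := fun t => B t *ᵥ w t
  have hZm : Measurable Z := measurable_mulVec hBm hwm
  have hHy : ∀ᵐ t ∂ν, H t *ᵥ y t = Z t := by
    filter_upwards [hB] with t ht
    rw [← ht.2, ← mulVec_mulVec]
  filter_upwards [hres, hfy,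
    ae_integrable_mulVec_of_memLp hGm hG hZm (memLp_mulVec_of_norm_le hBm hBc hwm hw)]
    with x hx hfx hxint
  calc ∫ t, (B x * G x t * B t) *ᵥ f t ∂ν = ∫ t, B x *ᵥ (G x t *ᵥ Z t) ∂ν := by
        refine integral_congr_ae ?_
        filter_upwards [hfy] with t ht
        simp only [Z, w, ht, mulVec_mulVec, mul_assoc]
    _ = B x *ᵥ ∫ t, (G x t * H t) *ᵥ y t ∂ν := by
        rw [integral_mulVec _ hxint]
        refine congrArg _ (integral_congr_ae (hHy.mono fun t ht => ?_))
        simp only [← mulVec_mulVec, ht]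
    _ = μ • f x := by
        rw [mulVec_sub, sub_eq_zero] at hx
        rw [hx, mulVec_smul, ← hfx]

end Kernel

theorem statement13_general (N : ℝ) (H Hsqrt : ℝ → Matrix (Fin 2) (Fin 2) ℂ)
    (hpsd : ∀ᵐ x ∂(volume.restrict (Set.Icc (0:ℝ) N)),
      (H x).PosSemidef ∧ (H x).trace.re ≤ 1)
    (hsq_meas : ∀ i j, Measurable fun x => Hsqrt x i j)
    (hsq : ∀ᵐ x ∂(volume.restrict (Set.Icc (0:ℝ) N)),
      (Hsqrt x).PosSemidef ∧ Hsqrt x * Hsqrt x = H x)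
    (G : ℝ → ℝ → Matrix (Fin 2) (Fin 2) ℂ)
    (hGmeas : ∀ i j, Measurable fun p : ℝ × ℝ => G p.1 p.2 i j)
    (hG : IntegrableOn (fun p : ℝ × ℝ => (opNorm (G p.1 p.2)) ^ 2)
      (Set.Icc (0:ℝ) N ×ˢ Set.Icc (0:ℝ) N))
    (μ : ℂ) (hμ : μ ≠ 0) (f : ℝ → Fin 2 → ℂ)
    (hf : MemLp f 2 (volume.restrict (Set.Icc (0:ℝ) N))) :
    (∀ᵐ x ∂(volume.restrict (Set.Icc (0:ℝ) N)),
        (∫ t in Set.Icc (0:ℝ) N, (Hsqrt x * G x t * Hsqrt t).mulVec (f t)) = μ • f x) ↔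
      (∃ y : ℝ → Fin 2 → ℂ, Measurable y ∧
        IntegrableOn (fun t => star (y t) ⬝ᵥ (H t).mulVec (y t)) (Set.Icc (0:ℝ) N) ∧
        (∀ᵐ x ∂(volume.restrict (Set.Icc (0:ℝ) N)), f x = (Hsqrt x).mulVec (y x)) ∧
        (∀ᵐ x ∂(volume.restrict (Set.Icc (0:ℝ) N)),
          (Hsqrt x).mulVec
            ((∫ t in Set.Icc (0:ℝ) N, (G x t * H t).mulVec (y t)) - μ • y x) = 0)) := by
  set ν := volume.restrict (Icc (0:ℝ) N)
  have hG' : Integrable (fun p : ℝ × ℝ => ‖toEuclideanCLM (𝕜 := ℂ) (G p.1 p.2)‖ ^ 2)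
      (ν.prod ν) := by
    rw [Measure.prod_restrict, ← Measure.volume_eq_prod]
    exact hG
  have hB : ∀ᵐ x ∂ν, (Hsqrt x).IsHermitian ∧ Hsqrt x * Hsqrt x = H x :=
    hsq.mono fun x hx => ⟨hx.1.1, hx.2⟩
  have hBc : ∀ᵐ x ∂ν, ∀ v, ‖toLp 2 (Hsqrt x *ᵥ v)‖ ≤ ‖toLp 2 v‖ := by
    filter_upwards [hpsd, hB] with x hHx hBx
    exact hBx.1.norm_toLp_mulVec_le (hBx.2 ▸ hHx.2)
  refine ⟨exists_of_sandwich_eigenfunction hsq_meas hB hBc hGmeas hG' hμ hf, ?_⟩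
  rintro ⟨y, hym, hyH, hfy, hres⟩
  exact sandwich_eigenfunction_of_exists hsq_meas hB hBc hGmeas hG' hym hyH hfy hres

/-- Correspondence of eigenfunctions: for `μ ≠ 0` and `f ∈ L²([0,N],ℂ²)`,
`∫₀ᴺ H(x)^{1/2} G(x,t) H(t)^{1/2} f(t) dt = μ f(x)` a.e. iff there is `y ∈ L²(H,[0,N])`
with `f = H^{1/2} y` a.e. and `H(x)^{1/2}(∫₀ᴺ G(x,t)H(t)y(t)dt − μ y(x)) = 0` a.e. -/
theorem statement13 (N : ℝ) (hN : 0 < N) (H Hsqrt : ℝ → Matrix (Fin 2) (Fin 2) ℂ)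
    (hmeas : ∀ i j, Measurable fun x => H x i j)
    (hpsd : ∀ᵐ x ∂(volume.restrict (Set.Icc (0:ℝ) N)),
      (H x).PosSemidef ∧ (H x).trace.re ≤ 1)
    (hint : ∀ i j, IntegrableOn (fun x => H x i j) (Set.Icc (0:ℝ) N))
    (hsq_meas : ∀ i j, Measurable fun x => Hsqrt x i j)
    (hsq : ∀ᵐ x ∂(volume.restrict (Set.Icc (0:ℝ) N)),
      (Hsqrt x).PosSemidef ∧ Hsqrt x * Hsqrt x = H x)
    (G : ℝ → ℝ → Matrix (Fin 2) (Fin 2) ℂ)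
    (hGmeas : ∀ i j, Measurable fun p : ℝ × ℝ => G p.1 p.2 i j)
    (hG : IntegrableOn (fun p : ℝ × ℝ => (opNorm (G p.1 p.2)) ^ 2)
      (Set.Icc (0:ℝ) N ×ˢ Set.Icc (0:ℝ) N))
    (μ : ℂ) (hμ : μ ≠ 0) (f : ℝ → Fin 2 → ℂ)
    (hf : MemLp f 2 (volume.restrict (Set.Icc (0:ℝ) N))) :
    (∀ᵐ x ∂(volume.restrict (Set.Icc (0:ℝ) N)),
        (∫ t in Set.Icc (0:ℝ) N, (Hsqrt x * G x t * Hsqrt t).mulVec (f t)) = μ • f x) ↔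
      (∃ y : ℝ → Fin 2 → ℂ, Measurable y ∧
        IntegrableOn (fun t => star (y t) ⬝ᵥ (H t).mulVec (y t)) (Set.Icc (0:ℝ) N) ∧
        (∀ᵐ x ∂(volume.restrict (Set.Icc (0:ℝ) N)), f x = (Hsqrt x).mulVec (y x)) ∧
        (∀ᵐ x ∂(volume.restrict (Set.Icc (0:ℝ) N)),
          (Hsqrt x).mulVec
            ((∫ t in Set.Icc (0:ℝ) N, (G x t * H t).mulVec (y t)) - μ • y x) = 0)) :=
  statement13_general N H Hsqrt hpsd hsq_meas hsq G hGmeas hG μ hμ f hf
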